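/- Let $X_1, \ldots, X_n$ be random variables in $[0,1]$ and $m \ge 2$ an integer, and let $p \in [0,1]$ with $m \le np$ be such that $\mathbb{E}[\prod_{i \in A} X_i] \le p^{|A|}$ for all $A \subseteq [n]$ with $|A| \le m$. Then for every $\alpha > 0$, $\Pr\left(\sum_{i=1}^n X_i \ge \alpha n p\right) \le \left(\frac{2e^2}{\alpha}\right)^m$. -/

import Mathlib

open MeasureTheory Finset

/-!
Markov's inequality applied to `(∑ i, X i)^m`. Expanding the power, `E[(∑ i, X i)^m]` is a sum over
words `t : Fin m → [n]` of `E[∏ j, X (t j)]`; since `X i ∈ [0,1]`, repeated letters can be dropped, so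
each word contributes at most `p^k` with `k` its number of distinct letters. There are at most
`C(n,k) k^m` such words, and `C(n,k) k^m p^k ≤ (n^k/k!) k^m p^k ≤ (e n p)^m` because `k ≤ m ≤ n p` and
`k^k/k! ≤ e^k`. Summing over `0 ≤ k ≤ m` gives `E[(∑ i, X i)^m] ≤ (m+1)(e n p)^m ≤ (2 e n p)^m`.
-/

theorem card_filter_card_image_eq_le {ι : Type*} [Fintype ι] [DecidableEq ι] (m k : ℕ) :
    #{t : Fin m → ι | #(univ.image t) = k} ≤ (Fintype.card ι).choose k * k ^ m := by
  calc #{t : Fin m → ι | #(univ.image t) = k}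
      ≤ #((powersetCard k univ).biUnion fun S => Fintype.piFinset fun _ : Fin m => S) := by
        refine card_le_card fun t ht => mem_biUnion.2 ⟨univ.image t, ?_, ?_⟩
        · exact mem_powersetCard.2 ⟨subset_univ _, (mem_filter.1 ht).2⟩
        · exact Fintype.mem_piFinset.2 fun j => mem_image_of_mem t (mem_univ j)
    _ ≤ ∑ S ∈ powersetCard k univ, #(Fintype.piFinset fun _ : Fin m => S) := card_biUnion_le
    _ = (Fintype.card ι).choose k * k ^ m := by
        rw [sum_congr rfl fun S hS => by
          rw [Fintype.card_piFinset_const, (mem_powersetCard.1 hS).2]]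
        rw [sum_const, card_powersetCard, card_univ, smul_eq_mul]

theorem choose_mul_pow_mul_pow_le {N m k : ℕ} {p : ℝ} (hp : 0 ≤ p) (hkm : k ≤ m)
    (hmNp : (m : ℝ) ≤ N * p) :
    (N.choose k : ℝ) * k ^ m * p ^ k ≤ (Real.exp 1 * (N * p)) ^ m := by
  have hkNp : (k : ℝ) ≤ N * p := le_trans (by exact_mod_cast hkm) hmNp
  calc (N.choose k : ℝ) * k ^ m * p ^ k
      ≤ (N : ℝ) ^ k / k.factorial * k ^ m * p ^ k := by
        gcongr
        exact Nat.choose_le_pow_div k N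
    _ = (N * p) ^ k * k ^ (m - k) * (k ^ k / k.factorial) := by
        rw [← Nat.sub_add_cancel hkm]
        simp only [Nat.add_sub_cancel, pow_add, mul_pow]
        ring
    _ ≤ (N * p) ^ k * (N * p) ^ (m - k) * Real.exp k := by
        gcongr
        exact Real.pow_div_factorial_le_exp _ k.cast_nonneg k
    _ ≤ (N * p) ^ k * (N * p) ^ (m - k) * Real.exp m := by
        gcongr
    _ = (Real.exp 1 * (N * p)) ^ m := by
        rw [← pow_add, Nat.add_sub_cancel' hkm, mul_pow (Real.exp 1), ← Real.exp_nat_mul, mul_one,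
          mul_comm]

theorem prod_comp_le_prod_image {ι κ : Type*} [Fintype κ] [DecidableEq ι] {x : ι → ℝ}
    (hx : ∀ i, x i ∈ Set.Icc (0 : ℝ) 1) (t : κ → ι) :
    ∏ j, x (t j) ≤ ∏ i ∈ univ.image t, x i := by
  rw [prod_comp]
  refine prod_le_prod (fun i _ => pow_nonneg (hx i).1 _) fun i hi => ?_
  obtain ⟨j, -, rfl⟩ := mem_image.1 hi
  exact pow_le_of_le_one (hx _).1 (hx _).2 (card_ne_zero.2 ⟨j, by simp⟩)

theorem sum_pow_card_image_le {ι : Type*} [Fintype ι] [DecidableEq ι] {m : ℕ} {p : ℝ}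
    (hp : 0 ≤ p) (hmNp : (m : ℝ) ≤ Fintype.card ι * p) :
    ∑ t : Fin m → ι, p ^ #(univ.image t) ≤ (2 * Real.exp 1 * (Fintype.card ι * p)) ^ m := by
  have hcard_mem : ∀ t : Fin m → ι, #(univ.image t) ∈ range (m + 1) := fun t =>
    mem_range_succ_iff.2 ((card_image_le).trans (card_fin m).le)
  calc ∑ t : Fin m → ι, p ^ #(univ.image t)
      = ∑ k ∈ univ.image fun t : Fin m → ι => #(univ.image t),
          #{t : Fin m → ι | #(univ.image t) = k} • p ^ k := sum_comp _ _
    _ ≤ ∑ k ∈ range (m + 1), #{t : Fin m → ι | #(univ.image t) = k} • p ^ k := by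
        refine sum_le_sum_of_subset_of_nonneg ?_ fun k _ _ => by positivity
        exact image_subset_iff.2 fun t _ => hcard_mem t
    _ ≤ ∑ _k ∈ range (m + 1), (Real.exp 1 * (Fintype.card ι * p)) ^ m := by
        refine sum_le_sum fun k hk => ?_
        rw [nsmul_eq_mul]
        calc (#{t : Fin m → ι | #(univ.image t) = k} : ℝ) * p ^ k
            ≤ (Fintype.card ι).choose k * k ^ m * p ^ k := by
              gcongr
              exact_mod_cast card_filter_card_image_eq_le m k
          _ ≤ _ := choose_mul_pow_mul_pow_le hp (mem_range_succ_iff.1 hk) hmNp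
    _ = (m + 1) * (Real.exp 1 * (Fintype.card ι * p)) ^ m := by
        rw [sum_const, card_range, nsmul_eq_mul]
        push_cast
        ring
    _ ≤ 2 ^ m * (Real.exp 1 * (Fintype.card ι * p)) ^ m := by
        gcongr
        exact_mod_cast Nat.lt_two_pow_self
    _ = (2 * Real.exp 1 * (Fintype.card ι * p)) ^ m := by
        rw [← mul_pow, mul_assoc]

section Moments

variable {Ω ι : Type*} [MeasurableSpace Ω] {μ : Measure Ω} [IsFiniteMeasure μ]

theorem integrable_prod_of_mem_Icc {s : Finset ι} {f : ι → Ω → ℝ} (hf : ∀ i, Measurable (f i))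
    (hf01 : ∀ i ω, f i ω ∈ Set.Icc (0 : ℝ) 1) : Integrable (fun ω => ∏ i ∈ s, f i ω) μ := by
  refine .of_bound (Finset.measurable_prod _ fun i _ => hf i).aestronglyMeasurable 1
    (ae_of_all _ fun ω => ?_)
  rw [Real.norm_eq_abs, abs_of_nonneg (prod_nonneg fun i _ => (hf01 i ω).1)]
  exact prod_le_one (fun i _ => (hf01 i ω).1) fun i _ => (hf01 i ω).2

theorem measureReal_le_of_integral_pow_le {f : Ω → ℝ} (hf : 0 ≤ f) {m : ℕ}
    (hint : Integrable (fun ω => f ω ^ m) μ) {c B : ℝ} (hc : 0 < c)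
    (hB : ∫ ω, f ω ^ m ∂μ ≤ B) : μ.real {ω | c ≤ f ω} ≤ B / c ^ m := by
  rw [le_div_iff₀' (pow_pos hc m)]
  calc c ^ m * μ.real {ω | c ≤ f ω} ≤ c ^ m * μ.real {ω | c ^ m ≤ f ω ^ m} := by
        have hsub : {ω | c ≤ f ω} ⊆ {ω | c ^ m ≤ f ω ^ m} := fun ω hω =>
          pow_le_pow_left₀ hc.le hω m
        exact mul_le_mul_of_nonneg_left (measureReal_mono hsub) (pow_nonneg hc.le m)
    _ ≤ ∫ ω, f ω ^ m ∂μ :=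
        mul_meas_ge_le_integral_of_nonneg (ae_of_all _ fun ω => pow_nonneg (hf ω) m) hint _
    _ ≤ B := hB

variable [Fintype ι] {X : ι → Ω → ℝ}

theorem integrable_sum_pow_of_mem_Icc (hmeas : ∀ i, Measurable (X i))
    (hX : ∀ i ω, X i ω ∈ Set.Icc (0 : ℝ) 1) (m : ℕ) :
    Integrable (fun ω => (∑ i, X i ω) ^ m) μ := by
  simp only [Fintype.sum_pow]
  exact integrable_finsetSum _ fun t _ =>
    integrable_prod_of_mem_Icc (fun j => hmeas (t j)) fun j => hX (t j)

theorem integral_sum_pow_le [DecidableEq ι] (hmeas : ∀ i, Measurable (X i))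
    (hX : ∀ i ω, X i ω ∈ Set.Icc (0 : ℝ) 1) {m : ℕ} {p : ℝ} (hp : 0 ≤ p)
    (hprod : ∀ A : Finset ι, #A ≤ m → ∫ ω, ∏ i ∈ A, X i ω ∂μ ≤ p ^ #A)
    (hmNp : (m : ℝ) ≤ Fintype.card ι * p) :
    ∫ ω, (∑ i, X i ω) ^ m ∂μ ≤ (2 * Real.exp 1 * (Fintype.card ι * p)) ^ m := by
  have hword : ∀ t : Fin m → ι, ∫ ω, ∏ j, X (t j) ω ∂μ ≤ p ^ #(univ.image t) := fun t =>
    calc ∫ ω, ∏ j, X (t j) ω ∂μ ≤ ∫ ω, ∏ i ∈ univ.image t, X i ω ∂μ :=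
          integral_mono (integrable_prod_of_mem_Icc (fun j => hmeas (t j)) fun j => hX (t j))
            (integrable_prod_of_mem_Icc hmeas hX)
            fun ω => prod_comp_le_prod_image (fun i => hX i ω) t
      _ ≤ p ^ #(univ.image t) := hprod _ ((card_image_le).trans (card_fin m).le)
  calc ∫ ω, (∑ i, X i ω) ^ m ∂μ = ∑ t : Fin m → ι, ∫ ω, ∏ j, X (t j) ω ∂μ := by
        simp only [Fintype.sum_pow]
        exact integral_finsetSum _ fun t _ =>
          integrable_prod_of_mem_Icc (fun j => hmeas (t j)) fun j => hX (t j)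
    _ ≤ ∑ t : Fin m → ι, p ^ #(univ.image t) := sum_le_sum fun t _ => hword t
    _ ≤ (2 * Real.exp 1 * (Fintype.card ι * p)) ^ m := sum_pow_card_image_le hp hmNp

end Moments

/-- Tail bound for sums of dependent `[0,1]`-valued random variables whose product
moments of order at most `m` are dominated by `p^|A|`. -/
theorem tail_bound {Ω : Type*} [MeasurableSpace Ω] (μ : Measure Ω) [IsProbabilityMeasure μ]
    (n m : ℕ) (hm : 2 ≤ m) (X : Fin n → Ω → ℝ)
    (hmeas : ∀ i, Measurable (X i))
    (hX : ∀ i ω, X i ω ∈ Set.Icc (0 : ℝ) 1)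
    (p : ℝ) (hp : p ∈ Set.Icc (0 : ℝ) 1)
    (hprod : ∀ A : Finset (Fin n), A.card ≤ m →
      (∫ ω, ∏ i ∈ A, X i ω ∂μ) ≤ p ^ A.card)
    (hmnp : (m : ℝ) ≤ n * p) (α : ℝ) (hα : 0 < α) :
    μ {ω | α * n * p ≤ ∑ i, X i ω} ≤ ENNReal.ofReal ((2 * Real.exp 2 / α) ^ m) := by
  have hnp : 0 < n * p := lt_of_lt_of_le (by norm_cast; omega) hmnp
  have hmoment := integral_sum_pow_le (μ := μ) hmeas hX hp.1 hprod (by simpa using hmnp)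
  rw [Fintype.card_fin] at hmoment
  have hc : 0 < α * n * p := by rw [mul_assoc]; exact mul_pos hα hnp
  have hmarkov := measureReal_le_of_integral_pow_le
    (fun ω => sum_nonneg fun i _ => (hX i ω).1) (integrable_sum_pow_of_mem_Icc hmeas hX m) hc
    hmoment
  rw [← ofReal_measureReal]
  gcongr
  calc μ.real {ω | α * n * p ≤ ∑ i, X i ω}
      ≤ (2 * Real.exp 1 * (n * p)) ^ m / (α * n * p) ^ m := hmarkov
    _ = (2 * Real.exp 1 / α) ^ m := by
        rw [← div_pow, mul_assoc α, mul_div_mul_right _ _ hnp.ne']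
    _ ≤ (2 * Real.exp 2 / α) ^ m := by
        gcongr
        norm_num
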